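/- Let g : ℝ → ℝ be continuous, bounded, and satisfy g(y) > 0 for all y > 0 and g odd (so g(−y) = −g(y)). Then for every t > 0 and y > 0, (1/√π)[ ∫_{−y/(2√t)}^{∞} e^{−ξ²} g(2√t ξ + y) dξ + ∫_{y/(2√t)}^{∞} e^{−ξ²} g(2√t ξ − y) dξ ] > 0. -/
import Mathlib


open MeasureTheory Real in
theorem monotonicity_preserved_positivity
    (g : ℝ → ℝ) (hcont : Continuous g)
    (hbdd : ∃ M : ℝ, ∀ y, |g y| ≤ M)
    (hpos : ∀ y : ℝ, 0 < y → 0 < g y)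
    (hodd : ∀ y : ℝ, g (-y) = -g y) :
    ∀ t y : ℝ, 0 < t → 0 < y →
      0 < (1 / Real.sqrt π) *
          ((∫ ξ in Set.Ioi (-(y / (2 * Real.sqrt t))),
              Real.exp (-ξ ^ 2) * g (2 * Real.sqrt t * ξ + y))
           + ∫ ξ in Set.Ioi (y / (2 * Real.sqrt t)),
              Real.exp (-ξ ^ 2) * g (2 * Real.sqrt t * ξ - y)) := by
  intro t y ht hy
  obtain ⟨M, hM⟩ := hbdd
  have hst : 0 < Real.sqrt t := Real.sqrt_pos.2 ht
  have h2st : 0 < 2 * Real.sqrt t := by linarith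
  -- integrability of the first integrand
  have haux : ∀ c : ℝ, Integrable (fun ξ : ℝ => Real.exp (-ξ ^ 2) * g (2 * Real.sqrt t * ξ + c)) := by
    intro c
    apply Integrable.mono' (g := fun ξ : ℝ => M * Real.exp (-ξ ^ 2))
    · have : Integrable (fun x : ℝ => Real.exp (-(1:ℝ) * x ^ 2)) := integrable_exp_neg_mul_sq one_pos
      simpa using this.const_mul M
    · exact ((Real.continuous_exp.comp (by continuity)).mul
        (hcont.comp (by continuity))).aestronglyMeasurable
    · filter_upwards with ξ
      rw [norm_mul, Real.norm_eq_abs, Real.norm_eq_abs, abs_of_pos (Real.exp_pos _),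
        mul_comm M]
      exact mul_le_mul_of_nonneg_left (hM _) (Real.exp_pos _).le
  -- first integrand is positive on the domain
  have hpos1 : ∀ ξ ∈ Set.Ioi (-(y / (2 * Real.sqrt t))),
      0 < Real.exp (-ξ ^ 2) * g (2 * Real.sqrt t * ξ + y) := by
    intro ξ hξ
    apply mul_pos (Real.exp_pos _)
    apply hpos
    have h1 : -ξ < y / (2 * Real.sqrt t) := neg_lt_of_neg_lt hξ
    have := (lt_div_iff₀ h2st).mp h1
    nlinarith
  have hpos2 : ∀ ξ ∈ Set.Ioi (y / (2 * Real.sqrt t)),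
      0 ≤ Real.exp (-ξ ^ 2) * g (2 * Real.sqrt t * ξ - y) := by
    intro ξ hξ
    apply le_of_lt
    apply mul_pos (Real.exp_pos _)
    apply hpos
    have : y / (2 * Real.sqrt t) < ξ := hξ
    have := (div_lt_iff₀ h2st).mp this
    nlinarith
  have hI1 : 0 < ∫ ξ in Set.Ioi (-(y / (2 * Real.sqrt t))),
      Real.exp (-ξ ^ 2) * g (2 * Real.sqrt t * ξ + y) := by
    rw [MeasureTheory.setIntegral_pos_iff_support_of_nonneg_ae]
    · have hsub : Set.Ioi (-(y / (2 * Real.sqrt t))) ⊆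
          Function.support (fun ξ : ℝ => Real.exp (-ξ ^ 2) * g (2 * Real.sqrt t * ξ + y))
            ∩ Set.Ioi (-(y / (2 * Real.sqrt t))) := by
        intro ξ hξ
        exact ⟨ne_of_gt (hpos1 ξ hξ), hξ⟩
      calc (0 : ENNReal) < volume (Set.Ioi (-(y / (2 * Real.sqrt t)))) := by
            simp [Real.volume_Ioi]
        _ ≤ _ := measure_mono hsub
    · filter_upwards [ae_restrict_mem measurableSet_Ioi] with ξ hξ
      exact (hpos1 ξ hξ).le
    · exact (haux y).integrableOn
  have hI2 : 0 ≤ ∫ ξ in Set.Ioi (y / (2 * Real.sqrt t)),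
      Real.exp (-ξ ^ 2) * g (2 * Real.sqrt t * ξ - y) :=
    setIntegral_nonneg measurableSet_Ioi hpos2
  have hπ : 0 < 1 / Real.sqrt π := by positivity
  exact mul_pos hπ (by linarith)
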